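/- Let N ≥ 3 be odd. Then there exists a real polynomial Q in N variables such that for all a ∈ ℝ^{N−1} and b ∈ ℝ with b + |a|²/4 ≥ 0, the Lebesgue volume of {(x', x_N) : |x'|² ≤ x_N ≤ ⟨a, x'⟩ + b} equals Q(a₁, …, a_{N−1}, b). That is, for odd N the volume function defined by the elliptic paraboloid is polynomial in the hyperplane coefficients. -/

import Mathlib

/-!
Slicing along the last coordinate, the volume is `∫ (⟪a, x⟫ + b - ‖x‖²)₊ dx`. Completing the
square, `⟪a, x⟫ + b - ‖x‖² = S - ‖x - a/2‖²` with `S = b + ‖a‖²/4`, so after a translation the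
volume is `∫ (S - ‖z‖²)₊ dz`. By the layer-cake formula this is `∫₀^S vol {‖z‖² < S - t} dt`,
and the level sets are balls of radius `√(S - t)`, giving `ω ∫₀^S (S - t)^((N-1)/2) dt` with `ω`
the volume of the unit ball. For odd `N` the exponent `k = (N-1)/2` is an integer, so the volume
is `ω S^(k+1)/(k+1)`, a polynomial in `(a, b)`.
-/

open MeasureTheory Set Metric Module MvPolynomial
open scoped RealInnerProductSpace

theorem measure_prod_setOf_le_and_le {α : Type*} [MeasurableSpace α] (μ : Measure α)
    {f g : α → ℝ} (hf : Measurable f) (hg : Measurable g) :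
    μ.prod volume {p : α × ℝ | f p.1 ≤ p.2 ∧ p.2 ≤ g p.1} =
      ∫⁻ x, ENNReal.ofReal (g x - f x) ∂μ := by
  have hs : MeasurableSet {p : α × ℝ | f p.1 ≤ p.2 ∧ p.2 ≤ g p.1} :=
    (measurableSet_le (hf.comp measurable_fst) measurable_snd).inter
      (measurableSet_le measurable_snd (hg.comp measurable_fst))
  rw [Measure.prod_apply hs]
  exact lintegral_congr fun x ↦ Real.volume_Icc (a := f x) (b := g x)

theorem lintegral_ofReal_inner_add_sub_norm_sq {E : Type*} [NormedAddCommGroup E]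
    [InnerProductSpace ℝ E] [MeasurableSpace E] [MeasurableAdd E] (μ : Measure E)
    [μ.IsAddRightInvariant] (a : E) (b : ℝ) :
    ∫⁻ x, ENNReal.ofReal (⟪a, x⟫ + b - ‖x‖ ^ 2) ∂μ =
      ∫⁻ z, ENNReal.ofReal (b + ‖a‖ ^ 2 / 4 - ‖z‖ ^ 2) ∂μ := by
  have complete_square : ∀ x : E,
      ⟪a, x⟫ + b - ‖x‖ ^ 2 = b + ‖a‖ ^ 2 / 4 - ‖x - (2⁻¹ : ℝ) • a‖ ^ 2 := by
    intro x
    rw [norm_sub_sq_real, real_inner_smul_right, norm_smul, real_inner_comm]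
    norm_num
    ring
  simp_rw [complete_square]
  exact lintegral_sub_right_eq_self (fun z ↦ ENNReal.ofReal (b + ‖a‖ ^ 2 / 4 - ‖z‖ ^ 2)) _

theorem lintegral_Ioo_ofReal_sub_pow {S : ℝ} (hS : 0 ≤ S) (k : ℕ) :
    ∫⁻ t in Ioo 0 S, ENNReal.ofReal ((S - t) ^ k) = ENNReal.ofReal (S ^ (k + 1) / (k + 1)) := by
  rw [← ofReal_integral_eq_lintegral_ofReal, ← integral_Ioc_eq_integral_Ioo,
    ← intervalIntegral.integral_of_le hS, intervalIntegral.integral_comp_sub_left (· ^ k) S,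
    sub_self, sub_zero, integral_pow, zero_pow k.succ_ne_zero, sub_zero]
  · exact ((continuous_const.sub continuous_id).pow k).integrableOn_Icc.mono_set
      Ioo_subset_Icc_self
  · filter_upwards [ae_restrict_mem measurableSet_Ioo] with t ht
    exact pow_nonneg (sub_nonneg.2 ht.2.le) k

section HaarMeasure

variable {E : Type*} [NormedAddCommGroup E] [InnerProductSpace ℝ E] [FiniteDimensional ℝ E]
  [MeasurableSpace E] [BorelSpace E] (μ : Measure E) [μ.IsAddHaarMeasure]

theorem measure_setOf_lt_sub_norm_sq {S t : ℝ} (ht : t < S) :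
    μ {z | t < S - ‖z‖ ^ 2} = ENNReal.ofReal (√(S - t) ^ finrank ℝ E) * μ (ball 0 1) := by
  have level_set_eq_ball : {z : E | t < S - ‖z‖ ^ 2} = ball 0 √(S - t) := by
    ext z
    rw [mem_ball_zero_iff, Real.lt_sqrt (norm_nonneg z), mem_ofPred_eq]
    constructor <;> intro h <;> linarith
  rw [level_set_eq_ball, Measure.addHaar_ball_of_pos μ _ (Real.sqrt_pos.2 (sub_pos.2 ht))]

theorem lintegral_ofReal_sub_norm_sq {k : ℕ} (hk : finrank ℝ E = 2 * k) {S : ℝ} (hS : 0 ≤ S) :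
    ∫⁻ z, ENNReal.ofReal (S - ‖z‖ ^ 2) ∂μ =
      μ (ball 0 1) * ENNReal.ofReal (S ^ (k + 1) / (k + 1)) := by
  have layer_cake : ∫⁻ z, ENNReal.ofReal (S - ‖z‖ ^ 2) ∂μ =
      ∫⁻ t in Ioi 0, μ {z | t < max (S - ‖z‖ ^ 2) 0} := by
    rw [← lintegral_eq_lintegral_meas_lt μ (f := fun z ↦ max (S - ‖z‖ ^ 2) 0)
      (ae_of_all _ fun z ↦ le_max_right _ 0) (by fun_prop)]
    simp only [ENNReal.ofReal_max, ENNReal.ofReal_zero, max_zero]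
  have level_set : ∀ t ∈ Ioi (0 : ℝ),
      μ {z | t < max (S - ‖z‖ ^ 2) 0} = μ {z | t < S - ‖z‖ ^ 2} := by
    intro t ht
    simp_rw [lt_max_iff, or_iff_left (not_lt.2 (mem_Ioi.1 ht).le)]
  have empty_above : ∀ t ∈ Ioi S, μ {z | t < S - ‖z‖ ^ 2} = 0 := by
    intro t ht
    rw [← measure_empty (μ := μ)]
    congr 1
    exact eq_empty_of_forall_notMem fun z (hz : t < S - ‖z‖ ^ 2) ↦ by
      linarith [mem_Ioi.1 ht, sq_nonneg ‖z‖]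
  have ball_below : ∀ t ∈ Ioo 0 S,
      μ {z | t < S - ‖z‖ ^ 2} = ENNReal.ofReal ((S - t) ^ k) * μ (ball 0 1) := by
    intro t ht
    rw [measure_setOf_lt_sub_norm_sq μ ht.2, hk, pow_mul, Real.sq_sqrt (sub_nonneg.2 ht.2.le)]
  rw [layer_cake, setLIntegral_congr_fun measurableSet_Ioi level_set,
    ← Ioc_union_Ioi_eq_Ioi hS, lintegral_union measurableSet_Ioi Ioc_disjoint_Ioi_same,
    setLIntegral_congr_fun measurableSet_Ioi empty_above, lintegral_zero, add_zero,
    ← setLIntegral_congr Ioo_ae_eq_Ioc, setLIntegral_congr_fun measurableSet_Ioo ball_below,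
    lintegral_mul_const' _ _ measure_ball_lt_top.ne, lintegral_Ioo_ofReal_sub_pow hS, mul_comm]

theorem measure_prod_setOf_norm_sq_le_and_le_inner_add {k : ℕ} (hk : finrank ℝ E = 2 * k)
    (a : E) (b : ℝ) (hab : 0 ≤ b + ‖a‖ ^ 2 / 4) :
    μ.prod volume {p : E × ℝ | ‖p.1‖ ^ 2 ≤ p.2 ∧ p.2 ≤ ⟪a, p.1⟫ + b} =
      μ (ball 0 1) * ENNReal.ofReal ((b + ‖a‖ ^ 2 / 4) ^ (k + 1) / (k + 1)) := by
  rw [measure_prod_setOf_le_and_le μ (f := fun x ↦ ‖x‖ ^ 2) (g := fun x ↦ ⟪a, x⟫ + b)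
      (by fun_prop) (by fun_prop),
    lintegral_ofReal_inner_add_sub_norm_sq, lintegral_ofReal_sub_norm_sq μ hk hab]

end HaarMeasure

theorem paraboloid_volume_polynomial_odd_general (N : ℕ) (hNodd : Odd N) :
    ∃ Q : MvPolynomial (Fin (N - 1) ⊕ Unit) ℝ,
      ∀ (a : EuclideanSpace ℝ (Fin (N - 1))) (b : ℝ), 0 ≤ b + ‖a‖ ^ 2 / 4 →
        (volume {p : EuclideanSpace ℝ (Fin (N - 1)) × ℝ |
            ‖p.1‖ ^ 2 ≤ p.2 ∧ p.2 ≤ ⟪a, p.1⟫ + b}).toReal =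
          MvPolynomial.eval (Sum.elim (fun i => a i) (fun _ => b)) Q := by
  obtain ⟨k, hk⟩ := hNodd
  have hdim : finrank ℝ (EuclideanSpace ℝ (Fin (N - 1))) = 2 * k := by
    rw [finrank_euclideanSpace_fin]; omega
  set ω := (volume (ball (0 : EuclideanSpace ℝ (Fin (N - 1))) 1)).toReal
  refine ⟨C (ω / (k + 1)) * (X (.inr ()) + C 4⁻¹ * ∑ i, X (.inl i) ^ 2) ^ (k + 1), ?_⟩
  intro a b hab
  rw [Measure.volume_eq_prod, measure_prod_setOf_norm_sq_le_and_le_inner_add _ hdim a b hab,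
    ENNReal.toReal_mul, ENNReal.toReal_ofReal (by positivity), EuclideanSpace.norm_sq_eq]
  simp only [map_mul, map_pow, map_add, map_sum, eval_C, eval_X, Sum.elim_inr, Sum.elim_inl,
    Real.norm_eq_abs, sq_abs]
  ring

/-- Let `N ≥ 3` be odd.  There is a real polynomial `Q` in `N`
variables such that for all `a ∈ ℝ^{N−1}` and `b ∈ ℝ` with `b + |a|²/4 ≥ 0`, the volume of
`{(x', x_N) : |x'|² ≤ x_N ≤ ⟨a,x'⟩ + b}` equals `Q(a₁, …, a_{N−1}, b)`: for odd `N` the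
volume function of the elliptic paraboloid is polynomial in the hyperplane coefficients. -/
theorem paraboloid_volume_polynomial_odd (N : ℕ) (hN : 3 ≤ N) (hNodd : Odd N) :
    ∃ Q : MvPolynomial (Fin (N - 1) ⊕ Unit) ℝ,
      ∀ (a : EuclideanSpace ℝ (Fin (N - 1))) (b : ℝ), 0 ≤ b + ‖a‖ ^ 2 / 4 →
        (volume {p : EuclideanSpace ℝ (Fin (N - 1)) × ℝ |
            ‖p.1‖ ^ 2 ≤ p.2 ∧ p.2 ≤ ⟪a, p.1⟫ + b}).toReal =
          MvPolynomial.eval (Sum.elim (fun i => a i) (fun _ => b)) Q :=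
  paraboloid_volume_polynomial_odd_general N hNodd
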